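/- arXiv:2510.00784 — 2 statements merged into one kernel-verified Lean document; each statement's English description precedes it below -/
import Mathlib

section
/- Let v : ℝ³ → ℝ be C², write coordinates (x,y,t), and suppose at a point ξ we have ∇₃(∂ₓv)(ξ) = a₁·k + a₂·n and ∇₃(∂_y v)(ξ) = b₁·k + b₂·n for an orthonormal positively oriented frame (t, k, n) of ℝ³ (i.e., the gradients of vₓ and v_y have no component along t). Then the 2×2 spatial Hessian determinant D_xy := v_xx·v_yy − v_xy² at ξ equals (a₁b₂ − a₂b₁)·t₃, where t₃ is the third component of t. -/
noncomputable def px (f : ℝ × ℝ × ℝ → ℝ) (p : ℝ × ℝ × ℝ) : ℝ := fderiv ℝ f p (1, 0, 0)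
noncomputable def py (f : ℝ × ℝ × ℝ → ℝ) (p : ℝ × ℝ × ℝ) : ℝ := fderiv ℝ f p (0, 1, 0)
noncomputable def pt (f : ℝ × ℝ × ℝ → ℝ) (p : ℝ × ℝ × ℝ) : ℝ := fderiv ℝ f p (0, 0, 1)

/-! Since `v` is `C²`, `v_xy = v_yx`, so `D_xy` is the determinant of the matrix with rows
`∇vₓ` and `∇v_y` restricted to the `(x, y)` coordinates. That matrix factors as the coefficient
matrix `[[a₁, a₂], [b₁, b₂]]` times the `(x, y)` block of the frame `(k, n)`, whose determinant
`k₀n₁ − k₁n₀` is the third component of `k × n = k × (t × k) = |k|² t − (k · t) k = t`. -/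

section SecondDerivative

variable {E F : Type*} [NormedAddCommGroup E] [NormedSpace ℝ E]
  [NormedAddCommGroup F] [NormedSpace ℝ F]

theorem fderiv_fderiv_apply_eq {f : E → F} {x : E} (hf : ContDiffAt ℝ 2 f x) (u w : E) :
    fderiv ℝ (fun p => fderiv ℝ f p w) x u = fderiv ℝ (fderiv ℝ f) x u w := by
  have hdf : DifferentiableAt ℝ (fderiv ℝ f) x :=
    (hf.fderiv_right (m := 1) le_rfl).differentiableAt one_ne_zero
  rw [fderiv_clm_apply hdf (differentiableAt_const w)]
  simp

theorem fderiv_fderiv_apply_comm {f : E → F} {x : E} (hf : ContDiffAt ℝ 2 f x) (u w : E) :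
    fderiv ℝ (fun p => fderiv ℝ f p w) x u = fderiv ℝ (fun p => fderiv ℝ f p u) x w := by
  rw [fderiv_fderiv_apply_eq hf, fderiv_fderiv_apply_eq hf,
    hf.isSymmSndFDerivAt (by simp)]

end SecondDerivative

theorem py_px_eq_px_py {v : ℝ × ℝ × ℝ → ℝ} (hv : ContDiff ℝ 2 v) (ξ : ℝ × ℝ × ℝ) :
    py (px v) ξ = px (py v) ξ :=
  fderiv_fderiv_apply_comm hv.contDiffAt _ _

theorem det_fin_two_mul_expand (a₁ a₂ b₁ b₂ k₀ k₁ n₀ n₁ : ℝ) :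
    (a₁ * k₀ + a₂ * n₀) * (b₁ * k₁ + b₂ * n₁) - (a₁ * k₁ + a₂ * n₁) * (b₁ * k₀ + b₂ * n₀)
      = (a₁ * b₂ - a₂ * b₁) * (k₀ * n₁ - k₁ * n₀) := by
  ring

theorem cross_cross_self_apply_two {t k n : Fin 3 → ℝ}
    (hk : k 0 ^ 2 + k 1 ^ 2 + k 2 ^ 2 = 1)
    (htk : t 0 * k 0 + t 1 * k 1 + t 2 * k 2 = 0)
    (hn0 : n 0 = t 1 * k 2 - t 2 * k 1)
    (hn1 : n 1 = t 2 * k 0 - t 0 * k 2) :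
    k 0 * n 1 - k 1 * n 0 = t 2 := by
  rw [hn0, hn1]
  linear_combination t 2 * hk - k 2 * htk

theorem spatial_hessian_determinant_general (v : ℝ × ℝ × ℝ → ℝ) (hv : ContDiff ℝ 2 v)
    (ξ : ℝ × ℝ × ℝ) (t k n : Fin 3 → ℝ) (a₁ a₂ b₁ b₂ : ℝ)
    (hk : k 0 ^ 2 + k 1 ^ 2 + k 2 ^ 2 = 1)
    (htk : t 0 * k 0 + t 1 * k 1 + t 2 * k 2 = 0)
    (hn0 : n 0 = t 1 * k 2 - t 2 * k 1)
    (hn1 : n 1 = t 2 * k 0 - t 0 * k 2)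
    (hx0 : px (px v) ξ = a₁ * k 0 + a₂ * n 0)
    (hx1 : py (px v) ξ = a₁ * k 1 + a₂ * n 1)
    (hy0 : px (py v) ξ = b₁ * k 0 + b₂ * n 0)
    (hy1 : py (py v) ξ = b₁ * k 1 + b₂ * n 1) :
    px (px v) ξ * py (py v) ξ - (py (px v) ξ) ^ 2 = (a₁ * b₂ - a₂ * b₁) * t 2 := by
  calc px (px v) ξ * py (py v) ξ - (py (px v) ξ) ^ 2
      = px (px v) ξ * py (py v) ξ - py (px v) ξ * px (py v) ξ := by
        rw [sq, py_px_eq_px_py hv]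
    _ = (a₁ * k 0 + a₂ * n 0) * (b₁ * k 1 + b₂ * n 1)
          - (a₁ * k 1 + a₂ * n 1) * (b₁ * k 0 + b₂ * n 0) := by
        rw [hx0, hy1, hx1, hy0]
    _ = (a₁ * b₂ - a₂ * b₁) * (k 0 * n 1 - k 1 * n 0) := det_fin_two_mul_expand ..
    _ = (a₁ * b₂ - a₂ * b₁) * t 2 := by
        rw [cross_cross_self_apply_two hk htk hn0 hn1]

/-- If at ξ the full gradients of vₓ and v_y lie in the span of k and n
(an orthonormal positively oriented frame (t,k,n)), namely ∇₃vₓ = a₁k + a₂n and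
∇₃v_y = b₁k + b₂n, then D_xy := v_xx·v_yy − v_xy² = (a₁b₂ − a₂b₁)·t₃. -/
theorem spatial_hessian_determinant (v : ℝ × ℝ × ℝ → ℝ) (hv : ContDiff ℝ 2 v)
    (ξ : ℝ × ℝ × ℝ) (t k n : Fin 3 → ℝ) (a₁ a₂ b₁ b₂ : ℝ)
    (ht : t 0 ^ 2 + t 1 ^ 2 + t 2 ^ 2 = 1)
    (hk : k 0 ^ 2 + k 1 ^ 2 + k 2 ^ 2 = 1)
    (htk : t 0 * k 0 + t 1 * k 1 + t 2 * k 2 = 0)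
    (hn0 : n 0 = t 1 * k 2 - t 2 * k 1)
    (hn1 : n 1 = t 2 * k 0 - t 0 * k 2)
    (hn2 : n 2 = t 0 * k 1 - t 1 * k 0)
    (hx0 : px (px v) ξ = a₁ * k 0 + a₂ * n 0)
    (hx1 : py (px v) ξ = a₁ * k 1 + a₂ * n 1)
    (hx2 : pt (px v) ξ = a₁ * k 2 + a₂ * n 2)
    (hy0 : px (py v) ξ = b₁ * k 0 + b₂ * n 0)
    (hy1 : py (py v) ξ = b₁ * k 1 + b₂ * n 1)
    (hy2 : pt (py v) ξ = b₁ * k 2 + b₂ * n 2) :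
    px (px v) ξ * py (py v) ξ - (py (px v) ξ) ^ 2 = (a₁ * b₂ - a₂ * b₁) * t 2 :=
  spatial_hessian_determinant_general v hv ξ t k n a₁ a₂ b₁ b₂ hk htk hn0 hn1 hx0 hx1 hy0 hy1
end

section
/- With notation as above (orthonormal t, k, n = t × k, μ := n₁²+n₂² ≠ 0, and X, Y solving the linear system), the determinant D_N := p·Y − X·q satisfies μ·D_N = β·(p·n₂ − q·n₁) − t₃·(p² + q²). -/
/-!
Eliminating `X` and `Y` from the two linear equations expresses `μ·(p·Y − X·q)` as
`β·(p·n₂ − q·n₁)` plus `(p² + q²)` times the third component of `n × k`. For the orthonormal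
pair `t, k` and `n = t × k`, the BAC–CAB rule gives `n × k = −k × (t × k) = −t`.
-/

lemma mul_det_eq_of_normal_system {k₀ k₁ n₀ n₁ β p q X Y : ℝ}
    (heq1 : p * k₀ + X * n₀ + q * k₁ + Y * n₁ = β)
    (heq2 : p * k₁ + X * n₁ = q * k₀ + Y * n₀) :
    (n₀ ^ 2 + n₁ ^ 2) * (p * Y - X * q) =
      β * (p * n₁ - q * n₀) + (p ^ 2 + q ^ 2) * (n₀ * k₁ - n₁ * k₀) := by
  linear_combination (p * n₁ - q * n₀) * heq1 - (p * n₀ + q * n₁) * heq2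

lemma cross_apply_two_eq_neg_of_orthonormal (t k n : Fin 3 → ℝ)
    (hk : k 0 ^ 2 + k 1 ^ 2 + k 2 ^ 2 = 1)
    (htk : t 0 * k 0 + t 1 * k 1 + t 2 * k 2 = 0)
    (hn0 : n 0 = t 1 * k 2 - t 2 * k 1)
    (hn1 : n 1 = t 2 * k 0 - t 0 * k 2) :
    n 0 * k 1 - n 1 * k 0 = -t 2 := by
  rw [hn0, hn1]
  linear_combination k 2 * htk - t 2 * hk

theorem normal_stability_determinant_formula_general (t k n : Fin 3 → ℝ)
    (hk : k 0 ^ 2 + k 1 ^ 2 + k 2 ^ 2 = 1)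
    (htk : t 0 * k 0 + t 1 * k 1 + t 2 * k 2 = 0)
    (hn0 : n 0 = t 1 * k 2 - t 2 * k 1)
    (hn1 : n 1 = t 2 * k 0 - t 0 * k 2)
    (β p q X Y : ℝ)
    (heq1 : p * k 0 + X * n 0 + q * k 1 + Y * n 1 = β)
    (heq2 : p * k 1 + X * n 1 = q * k 0 + Y * n 0) :
    (n 0 ^ 2 + n 1 ^ 2) * (p * Y - X * q) =
      β * (p * n 1 - q * n 0) - t 2 * (p ^ 2 + q ^ 2) := by
  rw [mul_det_eq_of_normal_system heq1 heq2,
    cross_apply_two_eq_neg_of_orthonormal t k n hk htk hn0 hn1]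
  ring

/-- For X, Y solving the linear system of the normal derivatives, the normal
stability determinant D_N := p·Y − X·q satisfies
μ·D_N = β·(p·n₂ − q·n₁) − t₃·(p² + q²). -/
theorem normal_stability_determinant_formula (t k n : Fin 3 → ℝ)
    (ht : t 0 ^ 2 + t 1 ^ 2 + t 2 ^ 2 = 1)
    (hk : k 0 ^ 2 + k 1 ^ 2 + k 2 ^ 2 = 1)
    (htk : t 0 * k 0 + t 1 * k 1 + t 2 * k 2 = 0)
    (hn0 : n 0 = t 1 * k 2 - t 2 * k 1)
    (hn1 : n 1 = t 2 * k 0 - t 0 * k 2)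
    (hn2 : n 2 = t 0 * k 1 - t 1 * k 0)
    (hμ : n 0 ^ 2 + n 1 ^ 2 ≠ 0)
    (β p q X Y : ℝ)
    (heq1 : p * k 0 + X * n 0 + q * k 1 + Y * n 1 = β)
    (heq2 : p * k 1 + X * n 1 = q * k 0 + Y * n 0) :
    (n 0 ^ 2 + n 1 ^ 2) * (p * Y - X * q) =
      β * (p * n 1 - q * n 0) - t 2 * (p ^ 2 + q ^ 2) :=
  normal_stability_determinant_formula_general t k n hk htk hn0 hn1 β p q X Y heq1 heq2
end
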